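/- arXiv:2004.12142 — 4 statements merged into one kernel-verified Lean document; each statement's English description precedes it below -/
import Mathlib

section
/- For every integer n ≥ 0, every integer r ≥ 1 and every real number x, E_{n,λ}^{(r)}(x) = Σ_{k=0}^{n} Σ_{l=0}^{k} S_{1,λ}(n,k)·S_{J,λ}^{(2)}(k,l)·C_l^{(r)}(x). -/
open Finset PowerSeries

/-- degenerate falling factorial `(x)_{n,λ}`; `dff 1 x n` is the ordinary falling factorial. -/
noncomputable def dff (lam x : ℝ) (n : ℕ) : ℝ := ∏ i ∈ Finset.range n, (x - (i : ℝ) * lam)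

/-- `(1)_{n,1/λ} = ∏_{i<n} (1 - i/λ)`. -/
noncomputable def oneFall (lam : ℝ) (n : ℕ) : ℝ := ∏ i ∈ Finset.range n, (1 - (i : ℝ) / lam)

/-- degenerate exponential `e_λ^x(t)` as a formal power series. -/
noncomputable def degExp (lam x : ℝ) : PowerSeries ℝ :=
  PowerSeries.mk fun n => dff lam x n / n.factorial

/-- `(1+t)^y = Σ_{n≥0} (y)_n t^n/n!`. -/
noncomputable def onePlus (y : ℝ) : PowerSeries ℝ :=
  PowerSeries.mk fun n => dff 1 y n / n.factorial

/-- `(1-t)^y = Σ_{n≥0} (y)_n (-1)^n t^n/n!`. -/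
noncomputable def oneMinus (y : ℝ) : PowerSeries ℝ :=
  PowerSeries.mk fun n => dff 1 y n * (-1) ^ n / n.factorial

/-- `log_λ(1+t) = Σ_{n≥1} λ^{n-1} (1)_{n,1/λ} t^n/n!`. -/
noncomputable def degLog (lam : ℝ) : PowerSeries ℝ :=
  PowerSeries.mk fun n => if n = 0 then 0 else lam ^ (n - 1) * oneFall lam n / n.factorial

/-- `log_λ(1-t) = Σ_{n≥1} λ^{n-1} (1)_{n,1/λ} (-1)^n t^n/n!`. -/
noncomputable def degLogNeg (lam : ℝ) : PowerSeries ℝ :=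
  PowerSeries.mk fun n =>
    if n = 0 then 0 else lam ^ (n - 1) * oneFall lam n * (-1) ^ n / n.factorial

/-- composition `f(g(t))` of formal power series (the usual composition when the
constant term of `g` is zero). -/
noncomputable def pcomp (f g : PowerSeries ℝ) : PowerSeries ℝ :=
  PowerSeries.mk fun n =>
    ∑ k ∈ Finset.range (n + 1), (PowerSeries.coeff k f) * (PowerSeries.coeff n (g ^ k))

lemma coeff_pow_zero {g : PowerSeries ℝ} (hg : constantCoeff g = 0) {n k : ℕ} (h : n < k) :
    PowerSeries.coeff n (g ^ k) = 0 := by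
  have : (X : PowerSeries ℝ) ^ k ∣ g ^ k :=
    pow_dvd_pow_of_dvd (PowerSeries.X_dvd_iff.2 hg) k
  exact PowerSeries.X_pow_dvd_iff.1 this n h

lemma coeff_pcomp (f g : PowerSeries ℝ) (n : ℕ) :
    PowerSeries.coeff n (pcomp f g) =
    ∑ k ∈ Finset.range (n + 1), (PowerSeries.coeff k f) * (PowerSeries.coeff n (g ^ k)) := by
  simp [pcomp]

/-- truncation: coeff n of pcomp equals coeff n of any long enough partial sum. -/
lemma coeff_pcomp_trunc {g : PowerSeries ℝ} (hg : constantCoeff g = 0)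
    (f : PowerSeries ℝ) {n N : ℕ} (hN : n < N) :
    PowerSeries.coeff n (pcomp f g) =
    PowerSeries.coeff n (∑ k ∈ Finset.range N, PowerSeries.C (PowerSeries.coeff k f) * g ^ k) := by
  rw [coeff_pcomp, map_sum]
  simp only [PowerSeries.coeff_C_mul]
  refine Finset.sum_subset ?_ ?_
  · intro k hk; simp only [Finset.mem_range] at *; omega
  · intro k _ hk
    simp only [Finset.mem_range, not_lt] at hk
    rw [coeff_pow_zero hg (by omega), mul_zero]
noncomputable def peval (p : Polynomial ℝ) (g : PowerSeries ℝ) : PowerSeries ℝ :=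
  Polynomial.eval₂ (PowerSeries.C) g p

lemma coeff_pcomp_peval {g : PowerSeries ℝ} (hg : constantCoeff g = 0)
    (f : PowerSeries ℝ) {n N : ℕ} (hN : n < N) :
    PowerSeries.coeff n (pcomp f g) =
    PowerSeries.coeff n (peval (PowerSeries.trunc N f) g) := by
  obtain ⟨M, rfl⟩ : ∃ M, N = M + 1 := ⟨N - 1, by omega⟩
  rw [coeff_pcomp_trunc hg f hN, peval,
    Polynomial.eval₂_eq_sum_range' _ (PowerSeries.natDegree_trunc_lt f M) g]
  apply congrArg
  refine Finset.sum_congr rfl fun k hk => ?_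
  rw [PowerSeries.coeff_trunc]
  simp only [Finset.mem_range] at hk
  rw [if_pos hk]
lemma coeff_peval (p : Polynomial ℝ) (g : PowerSeries ℝ) {N : ℕ} (n : ℕ)
    (hd : p.natDegree < N) :
    PowerSeries.coeff n (peval p g) =
    ∑ k ∈ Finset.range N, p.coeff k * PowerSeries.coeff n (g ^ k) := by
  rw [peval, Polynomial.eval₂_eq_sum_range' _ hd g, map_sum]
  exact Finset.sum_congr rfl fun k _ => by rw [PowerSeries.coeff_C_mul]

lemma peval_mul (p q : Polynomial ℝ) (g : PowerSeries ℝ) :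
    peval (p * q) g = peval p g * peval q g := Polynomial.eval₂_mul _ _

/-- if two polynomials agree on coefficients below N > n, their `peval`s agree at coeff n -/
lemma coeff_peval_congr {g : PowerSeries ℝ} (hg : constantCoeff g = 0)
    {p q : Polynomial ℝ} {n N : ℕ} (hN : n < N)
    (h : ∀ k, k < N → p.coeff k = q.coeff k) :
    PowerSeries.coeff n (peval p g) = PowerSeries.coeff n (peval q g) := by
  set M := max N (max (p.natDegree + 1) (q.natDegree + 1)) with hM
  have hp : p.natDegree < M := by omega
  have hq : q.natDegree < M := by omega
  rw [coeff_peval p g n hp, coeff_peval q g n hq]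
  refine Finset.sum_congr rfl fun k _ => ?_
  by_cases hk : k < N
  · rw [h k hk]
  · rw [coeff_pow_zero hg (by omega), mul_zero, mul_zero]

lemma pcomp_add (f₁ f₂ g : PowerSeries ℝ) :
    pcomp (f₁ + f₂) g = pcomp f₁ g + pcomp f₂ g := by
  ext n
  simp only [coeff_pcomp, map_add, ← Finset.sum_add_distrib]
  exact Finset.sum_congr rfl fun k _ => by ring

lemma pcomp_C (a : ℝ) (g : PowerSeries ℝ) :
    pcomp (PowerSeries.C a) g = PowerSeries.C a := by
  ext n
  rw [coeff_pcomp]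
  rw [Finset.sum_eq_single_of_mem 0 (by simp)
    (fun k _ hk => by simp [PowerSeries.coeff_C, hk])]
  simp [PowerSeries.coeff_one, PowerSeries.coeff_C]

lemma pcomp_one (g : PowerSeries ℝ) : pcomp 1 g = 1 := by
  have := pcomp_C 1 g; simpa using this

lemma pcomp_X {g : PowerSeries ℝ} (hg : constantCoeff g = 0) : pcomp PowerSeries.X g = g := by
  ext n
  rw [coeff_pcomp]
  rcases Nat.eq_zero_or_pos n with rfl | hn
  · simp [PowerSeries.coeff_X, hg]
  · rw [Finset.sum_eq_single 1]
    · simp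
    · intro k _ hk; simp [PowerSeries.coeff_X, hk]
    · intro h; simp at h; omega

lemma pcomp_mul {g : PowerSeries ℝ} (hg : constantCoeff g = 0) (f₁ f₂ : PowerSeries ℝ) :
    pcomp (f₁ * f₂) g = pcomp f₁ g * pcomp f₂ g := by
  ext n
  rw [PowerSeries.coeff_mul]
  have h1 : ∀ p ∈ Finset.HasAntidiagonal.antidiagonal n,
      (PowerSeries.coeff p.1 (pcomp f₁ g)) * (PowerSeries.coeff p.2 (pcomp f₂ g)) =
      (PowerSeries.coeff p.1 (peval (PowerSeries.trunc (n+1) f₁) g)) *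
      (PowerSeries.coeff p.2 (peval (PowerSeries.trunc (n+1) f₂) g)) := by
    intro p hp
    rw [Finset.HasAntidiagonal.mem_antidiagonal] at hp
    rw [coeff_pcomp_peval hg f₁ (N := n+1) (by omega),
      coeff_pcomp_peval hg f₂ (N := n+1) (by omega)]
  rw [Finset.sum_congr rfl h1, ← PowerSeries.coeff_mul, ← peval_mul,
    coeff_pcomp_peval hg (f₁ * f₂) (Nat.lt_succ_self n)]
  refine coeff_peval_congr hg (Nat.lt_succ_self n) ?_
  intro k hk
  rw [Polynomial.coeff_mul, PowerSeries.coeff_trunc, if_pos hk, PowerSeries.coeff_mul]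
  refine Finset.sum_congr rfl fun p hp => ?_
  rw [Finset.HasAntidiagonal.mem_antidiagonal] at hp
  rw [PowerSeries.coeff_trunc, PowerSeries.coeff_trunc, if_pos (by omega), if_pos (by omega)]

lemma pcomp_pow {g : PowerSeries ℝ} (hg : constantCoeff g = 0) (f : PowerSeries ℝ) (m : ℕ) :
    pcomp (f ^ m) g = (pcomp f g) ^ m := by
  induction m with
  | zero => simpa using pcomp_one g
  | succ m ih => rw [pow_succ, pow_succ, pcomp_mul hg, ih]

lemma constantCoeff_pcomp (f g : PowerSeries ℝ) :
    constantCoeff (pcomp f g) = constantCoeff f := by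
  rw [← PowerSeries.coeff_zero_eq_constantCoeff_apply,
    ← PowerSeries.coeff_zero_eq_constantCoeff_apply (φ := f), coeff_pcomp]
  simp

lemma pcomp_sub (f₁ f₂ g : PowerSeries ℝ) :
    pcomp (f₁ - f₂) g = pcomp f₁ g - pcomp f₂ g := by
  have h := pcomp_add (f₁ - f₂) f₂ g
  rw [sub_add_cancel] at h
  rw [h, add_sub_cancel_right]

lemma pcomp_assoc {g₁ g₂ : PowerSeries ℝ} (hg₁ : constantCoeff g₁ = 0)
    (hg₂ : constantCoeff g₂ = 0) (f : PowerSeries ℝ) :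
    pcomp (pcomp f g₁) g₂ = pcomp f (pcomp g₁ g₂) := by
  ext n
  rw [coeff_pcomp, coeff_pcomp]
  have key : ∀ k, PowerSeries.coeff n ((pcomp g₁ g₂) ^ k) =
      ∑ m ∈ Finset.range (n + 1), PowerSeries.coeff m (g₁ ^ k) *
        PowerSeries.coeff n (g₂ ^ m) := by
    intro k
    rw [← pcomp_pow hg₂ g₁ k, coeff_pcomp]
  have expand : ∀ k ∈ Finset.range (n + 1),
      PowerSeries.coeff k (pcomp f g₁) * PowerSeries.coeff n (g₂ ^ k) =
      ∑ j ∈ Finset.range (n + 1), PowerSeries.coeff j f * PowerSeries.coeff k (g₁ ^ j)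
        * PowerSeries.coeff n (g₂ ^ k) := by
    intro k hk
    rw [Finset.mem_range] at hk
    rw [coeff_pcomp, Finset.sum_mul]
    refine Finset.sum_subset (Finset.range_subset_range.2 (by omega)) ?_
    intro j _ hj
    rw [Finset.mem_range, not_lt] at hj
    rw [coeff_pow_zero hg₁ (by omega)]
    ring
  rw [Finset.sum_congr rfl expand, Finset.sum_comm]
  refine Finset.sum_congr rfl fun j _ => ?_
  rw [key j, Finset.mul_sum]
  exact Finset.sum_congr rfl fun k _ => by ring
lemma dff_zero (lam x : ℝ) : dff lam x 0 = 1 := by simp [dff]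

lemma dff_succ (lam x : ℝ) (n : ℕ) : dff lam x (n + 1) = dff lam x n * (x - n * lam) :=
  Finset.prod_range_succ _ n

/-- Vandermonde convolution for degenerate falling factorials. -/
lemma dff_add_eq (lam a b : ℝ) (n : ℕ) :
    dff lam (a + b) n = ∑ i ∈ Finset.range (n + 1),
      (n.choose i : ℝ) * dff lam a i * dff lam b (n - i) := by
  induction n with
  | zero => simp [dff]
  | succ n ih =>
    rw [Finset.sum_range_succ' (fun i => ((n+1).choose i : ℝ) * dff lam a i *
      dff lam b (n + 1 - i))]
    have h1 : ∀ i ∈ Finset.range (n + 1),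
        (((n+1).choose (i+1) : ℕ) : ℝ) * dff lam a (i+1) * dff lam b (n + 1 - (i+1)) =
        (n.choose i : ℝ) * dff lam a (i+1) * dff lam b (n - i)
          + (n.choose (i+1) : ℝ) * dff lam a (i+1) * dff lam b (n + 1 - (i+1)) := by
      intro i _
      rw [Nat.choose_succ_succ, Nat.cast_add]
      have : n + 1 - (i + 1) = n - i := by omega
      rw [this]; ring
    rw [Finset.sum_congr rfl h1, Finset.sum_add_distrib]
    have h2 : ∑ i ∈ Finset.range (n + 1),
        (n.choose (i+1) : ℝ) * dff lam a (i+1) * dff lam b (n + 1 - (i+1))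
        + ((n+1).choose 0 : ℝ) * dff lam a 0 * dff lam b (n + 1 - 0) =
        ∑ j ∈ Finset.range (n + 2), (n.choose j : ℝ) * dff lam a j * dff lam b (n + 1 - j) := by
      rw [Finset.sum_range_succ' (fun j => (n.choose j : ℝ) * dff lam a j * dff lam b (n + 1 - j))]
      simp
    rw [add_assoc, h2, Finset.sum_range_succ
      (fun j => (n.choose j : ℝ) * dff lam a j * dff lam b (n + 1 - j)) (n+1),
      Nat.choose_succ_self]
    simp only [Nat.cast_zero, zero_mul, add_zero]
    have h3 : ∀ i ∈ Finset.range (n + 1),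
        (n.choose i : ℝ) * dff lam a (i+1) * dff lam b (n - i)
          + (n.choose i : ℝ) * dff lam a i * dff lam b (n + 1 - i) =
        ((n.choose i : ℝ) * dff lam a i * dff lam b (n - i)) * (a + b - n * lam) := by
      intro i hi
      rw [Finset.mem_range] at hi
      have hni : n + 1 - i = (n - i) + 1 := by omega
      have hcast : ((n - i : ℕ) : ℝ) = (n : ℝ) - (i : ℝ) := by
        rw [Nat.cast_sub (by omega)]
      rw [hni, dff_succ, dff_succ, hcast]
      ring
    rw [← Finset.sum_add_distrib, Finset.sum_congr rfl h3, ← Finset.sum_mul, ← ih, dff_succ]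
lemma coeff_degExp (lam x : ℝ) (n : ℕ) :
    PowerSeries.coeff n (degExp lam x) = dff lam x n / n.factorial := by
  simp [degExp]

lemma degExp_mul (lam a b : ℝ) : degExp lam a * degExp lam b = degExp lam (a + b) := by
  ext n
  rw [PowerSeries.coeff_mul, coeff_degExp, dff_add_eq,
    Finset.Nat.sum_antidiagonal_eq_sum_range_succ_mk, Finset.sum_div]
  refine Finset.sum_congr rfl fun i hi => ?_
  rw [Finset.mem_range] at hi
  rw [coeff_degExp, coeff_degExp]
  have hfac : ((n.choose i : ℕ) : ℝ) * (i.factorial : ℝ) * ((n - i).factorial : ℝ)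
      = (n.factorial : ℝ) := by
    rw [← Nat.cast_mul, ← Nat.cast_mul, Nat.choose_mul_factorial_mul_factorial (by omega)]
  have h1 : (i.factorial : ℝ) ≠ 0 := Nat.cast_ne_zero.2 i.factorial_ne_zero
  have h2 : ((n - i).factorial : ℝ) ≠ 0 := Nat.cast_ne_zero.2 (n - i).factorial_ne_zero
  have h3 : (n.factorial : ℝ) ≠ 0 := Nat.cast_ne_zero.2 n.factorial_ne_zero
  field_simp
  rw [← hfac]
  ring

lemma degExp_zero (lam : ℝ) : degExp lam 0 = 1 := by
  ext n
  rw [coeff_degExp]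
  cases n with
  | zero => simp [dff]
  | succ n =>
    rw [PowerSeries.coeff_one, if_neg (Nat.succ_ne_zero n)]
    have : dff lam 0 (n + 1) = 0 := by
      refine Finset.prod_eq_zero (Finset.mem_range.2 (Nat.succ_pos n)) ?_
      simp
    rw [this, zero_div]

lemma degExp_nat (lam : ℝ) (m : ℕ) : degExp lam (m : ℝ) = (degExp lam 1) ^ m := by
  induction m with
  | zero => simpa using degExp_zero lam
  | succ m ih => rw [pow_succ, ← ih, degExp_mul, Nat.cast_succ]

lemma onePlus_eq (y : ℝ) : onePlus y = degExp 1 y := rfl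

lemma onePlus_one : onePlus 1 = 1 + PowerSeries.X := by
  ext n
  rw [onePlus_eq, coeff_degExp, map_add, PowerSeries.coeff_one, PowerSeries.coeff_X]
  match n with
  | 0 => simp [dff]
  | 1 => simp [dff]
  | (n+2) =>
    have : dff 1 1 (n+2) = 0 := by
      refine Finset.prod_eq_zero (i := 1) (Finset.mem_range.2 (by omega)) ?_
      norm_num
    rw [this]
    simp

lemma onePlus_nat (m : ℕ) : onePlus (m : ℝ) = (1 + PowerSeries.X) ^ m := by
  rw [onePlus_eq, degExp_nat, ← onePlus_eq, onePlus_one]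

noncomputable def dffPoly (lam : ℝ) (n : ℕ) : Polynomial ℝ :=
  ∏ i ∈ Finset.range n, (Polynomial.X - Polynomial.C ((i : ℝ) * lam))

lemma dffPoly_eval (lam x : ℝ) (n : ℕ) : (dffPoly lam n).eval x = dff lam x n := by
  rw [dffPoly, dff, Polynomial.eval_prod]
  exact Finset.prod_congr rfl fun i _ => by simp

lemma poly_eq_of_nat {p q : Polynomial ℝ} (h : ∀ m : ℕ, p.eval (m : ℝ) = q.eval (m : ℝ)) :
    p = q := by
  rw [← sub_eq_zero]
  refine Polynomial.eq_zero_of_infinite_isRoot _ ?_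
  have : Set.Infinite (Set.range ((↑) : ℕ → ℝ)) :=
    Set.infinite_range_of_injective Nat.cast_injective
  refine this.mono ?_
  rintro y ⟨m, rfl⟩
  simp [Polynomial.IsRoot, h m]
lemma constantCoeff_degExp (lam x : ℝ) : constantCoeff (degExp lam x) = 1 := by
  rw [← PowerSeries.coeff_zero_eq_constantCoeff_apply, coeff_degExp]
  simp [dff]

lemma constantCoeff_eh (lam : ℝ) : constantCoeff (degExp lam 1 - 1) = 0 := by
  rw [map_sub, constantCoeff_degExp, map_one, sub_self]

lemma one_add_eh (lam : ℝ) : 1 + (degExp lam 1 - 1) = degExp lam 1 := by ring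

lemma pcomp_onePlus_nat (lam : ℝ) (m : ℕ) :
    pcomp (onePlus (m : ℝ)) (degExp lam 1 - 1) = degExp lam (m : ℝ) := by
  rw [onePlus_nat, pcomp_pow (constantCoeff_eh lam), pcomp_add, pcomp_one,
    pcomp_X (constantCoeff_eh lam), one_add_eh, degExp_nat]

/-- Key identity: `(1+t)^x ∘ (e_λ(t) - 1) = e_λ^x(t)`. -/
lemma pcomp_onePlus (lam x : ℝ) :
    pcomp (onePlus x) (degExp lam 1 - 1) = degExp lam x := by
  ext n
  set c : ℕ → ℝ := fun k => PowerSeries.coeff n ((degExp lam 1 - 1) ^ k) with hc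
  have lhs_eval : ∀ y : ℝ, PowerSeries.coeff n (pcomp (onePlus y) (degExp lam 1 - 1)) =
      (∑ k ∈ Finset.range (n + 1),
        Polynomial.C (c k / k.factorial) * dffPoly 1 k).eval y := by
    intro y
    rw [coeff_pcomp, Polynomial.eval_finset_sum]
    refine Finset.sum_congr rfl fun k _ => ?_
    rw [Polynomial.eval_mul, Polynomial.eval_C, dffPoly_eval, onePlus,
      PowerSeries.coeff_mk]
    ring
  have rhs_eval : ∀ y : ℝ, PowerSeries.coeff n (degExp lam y) =
      (Polynomial.C ((n.factorial : ℝ))⁻¹ * dffPoly lam n).eval y := by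
    intro y
    rw [coeff_degExp, Polynomial.eval_mul, Polynomial.eval_C, dffPoly_eval, div_eq_inv_mul]
  have hpq : (∑ k ∈ Finset.range (n + 1),
        Polynomial.C (c k / k.factorial) * dffPoly 1 k) =
      Polynomial.C ((n.factorial : ℝ))⁻¹ * dffPoly lam n := by
    refine poly_eq_of_nat fun m => ?_
    rw [← lhs_eval, ← rhs_eval, pcomp_onePlus_nat]
  rw [lhs_eval x, hpq, ← rhs_eval x]
lemma dff_nat_mul_self_ne {lam : ℝ} (hlam : lam ≠ 0) (l : ℕ) :
    dff lam ((l : ℝ) * lam) l ≠ 0 := by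
  rw [dff]
  rw [Finset.prod_ne_zero_iff]
  intro i hi
  rw [Finset.mem_range] at hi
  have : (l : ℝ) * lam - (i : ℝ) * lam = ((l : ℝ) - i) * lam := by ring
  rw [this]
  refine mul_ne_zero ?_ hlam
  have : (i : ℝ) < l := by exact_mod_cast hi
  intro hz; rw [sub_eq_zero] at hz; exact absurd hz (by linarith)

lemma dff_nat_mul_eq_zero (lam : ℝ) {l j : ℕ} (h : l < j) :
    dff lam ((l : ℝ) * lam) j = 0 := by
  refine Finset.prod_eq_zero (Finset.mem_range.2 h) ?_
  ring

lemma dff_unique {lam : ℝ} (hlam : lam ≠ 0) (n : ℕ) (c d : ℕ → ℝ)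
    (h : ∀ y : ℝ, ∑ l ∈ Finset.range (n + 1), c l * dff lam y l =
      ∑ l ∈ Finset.range (n + 1), d l * dff lam y l) :
    ∀ l, l ≤ n → c l = d l := by
  set e : ℕ → ℝ := fun j => c j - d j with he
  have hz : ∀ y : ℝ, ∑ l ∈ Finset.range (n + 1), e l * dff lam y l = 0 := by
    intro y
    simp only [he, sub_mul, Finset.sum_sub_distrib]
    rw [h y, sub_self]
  suffices hs : ∀ l, l ≤ n → e l = 0 by
    intro l hl
    have := hs l hl
    simp only [he] at this
    linarith
  intro l
  induction l using Nat.strong_induction_on with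
  | _ l ih =>
    intro hl
    have h0 := hz ((l : ℝ) * lam)
    rw [Finset.sum_eq_single_of_mem l (Finset.mem_range.2 (by omega))] at h0
    · have := dff_nat_mul_self_ne hlam l
      rcases mul_eq_zero.1 h0 with h | h
      · exact h
      · exact absurd h this
    · intro j hj hjl
      rw [Finset.mem_range] at hj
      rcases lt_or_gt_of_ne hjl with hlt | hgt
      · rw [ih j hlt (by omega), zero_mul]
      · rw [dff_nat_mul_eq_zero lam hgt, mul_zero]
lemma pcomp_two (g : PowerSeries ℝ) : pcomp (2 : PowerSeries ℝ) g = 2 := by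
  have h2 : (2 : PowerSeries ℝ) = PowerSeries.C 2 := by
    rw [map_ofNat]
  rw [h2, pcomp_C]

/-- `E_{n,λ}^{(r)}(x) = Σ_{k=0}^n Σ_{l=0}^k S_{1,λ}(n,k) S_{J,λ}^{(2)}(k,l) C_l^{(r)}(x)`. -/
theorem stmt_11 (lam : ℝ) (hlam : lam ≠ 0) (r : ℕ) (hr : 1 ≤ r)
    (S1 : ℕ → ℕ → ℝ)
    (hS1 : ∀ (x : ℝ) (n : ℕ), dff 1 x n = ∑ l ∈ Finset.range (n + 1), S1 n l * dff lam x l)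
    (E C : ℝ → ℕ → ℝ)
    (hE : ∀ x : ℝ, (degExp lam 1 + degExp lam (-1)) ^ r *
      PowerSeries.mk (fun n => E x n / n.factorial) = 2 ^ r * degExp lam x)
    (hC : ∀ x : ℝ, (onePlus 2 + 1) ^ r *
      PowerSeries.mk (fun n => C x n / n.factorial) = 2 ^ r * onePlus (x + r))
    (SJ2 : ℕ → ℕ → ℝ)
    (hSJ2 : ∀ k : ℕ, PowerSeries.mk (fun n => SJ2 n k / n.factorial) =
      ((k.factorial : ℝ))⁻¹ • (pcomp (degExp lam 1) (degExp lam 1 - 1) - 1) ^ k)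
    (n : ℕ) (x : ℝ) :
    E x n = ∑ k ∈ Finset.range (n + 1), ∑ l ∈ Finset.range (k + 1),
      S1 n k * SJ2 k l * C x l := by
  classical
  have hh : constantCoeff (degExp lam 1 - 1) = 0 := constantCoeff_eh lam
  have hg : constantCoeff (pcomp (degExp lam 1) (degExp lam 1 - 1) - 1) = 0 := by
    rw [map_sub, constantCoeff_pcomp, constantCoeff_degExp, map_one, sub_self]
  -- abbreviations (as plain terms)
  -- Step A : g = eh ∘ eh
  have hA : pcomp (degExp lam 1) (degExp lam 1 - 1) - 1 =
      pcomp (degExp lam 1 - 1) (degExp lam 1 - 1) := by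
    have h1 : degExp lam 1 = (degExp lam 1 - 1) + 1 := by ring
    nth_rewrite 1 [h1]
    rw [pcomp_add, pcomp_one]
    ring
  -- coefficients of g powers from hSJ2
  have hSJc : ∀ m l : ℕ, PowerSeries.coeff m
      ((pcomp (degExp lam 1) (degExp lam 1 - 1) - 1) ^ l) =
      (l.factorial : ℝ) * (SJ2 m l / m.factorial) := by
    intro m l
    have h1 := congrArg (PowerSeries.coeff m) (hSJ2 l)
    rw [PowerSeries.coeff_mk, map_smul, smul_eq_mul] at h1
    have hl : (l.factorial : ℝ) ≠ 0 := Nat.cast_ne_zero.2 l.factorial_ne_zero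
    field_simp at h1 ⊢
    linarith [h1]
  -- B and its coefficients
  have hB : ∀ m : ℕ, PowerSeries.coeff m
      (pcomp (PowerSeries.mk fun l => C x l / l.factorial)
        (pcomp (degExp lam 1) (degExp lam 1 - 1) - 1)) =
      (∑ l ∈ Finset.range (m + 1), SJ2 m l * C x l) / m.factorial := by
    intro m
    rw [coeff_pcomp, Finset.sum_div]
    refine Finset.sum_congr rfl fun l _ => ?_
    rw [PowerSeries.coeff_mk, hSJc m l]
    have hl : (l.factorial : ℝ) ≠ 0 := Nat.cast_ne_zero.2 l.factorial_ne_zero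
    field_simp
  -- basic units
  have he1 : degExp lam 1 * degExp lam (-1) = 1 := by
    rw [degExp_mul]
    norm_num [degExp_zero]
  have hpe_ne : pcomp (degExp lam 1) (degExp lam 1 - 1) ≠ 0 := by
    intro h0
    have := constantCoeff_pcomp (degExp lam 1) (degExp lam 1 - 1)
    rw [h0, map_zero, constantCoeff_degExp] at this
    exact one_ne_zero this.symm
  have hsum_ne : pcomp (degExp lam 1 + degExp lam (-1)) (degExp lam 1 - 1) ≠ 0 := by
    intro h0
    have := constantCoeff_pcomp (degExp lam 1 + degExp lam (-1)) (degExp lam 1 - 1)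
    rw [h0, map_zero, map_add, constantCoeff_degExp, constantCoeff_degExp] at this
    norm_num at this
  -- Step C2 : transformed hC
  have hCg : pcomp ((onePlus 2 + 1) ^ r * PowerSeries.mk fun n => C x n / n.factorial)
        (pcomp (degExp lam 1) (degExp lam 1 - 1) - 1) =
      pcomp ((2:PowerSeries ℝ) ^ r * onePlus (x + r))
        (pcomp (degExp lam 1) (degExp lam 1 - 1) - 1) := by rw [hC x]
  -- LHS simplification
  have honePlus2 : onePlus 2 = (1 + PowerSeries.X) ^ 2 := by
    have := onePlus_nat 2
    norm_num at this
    exact this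
  have hLHS : pcomp ((onePlus 2 + 1) ^ r * PowerSeries.mk fun n => C x n / n.factorial)
        (pcomp (degExp lam 1) (degExp lam 1 - 1) - 1) =
      (pcomp (degExp lam 1) (degExp lam 1 - 1)) ^ r *
      (pcomp (degExp lam 1 + degExp lam (-1)) (degExp lam 1 - 1)) ^ r *
      pcomp (PowerSeries.mk fun l => C x l / l.factorial)
        (pcomp (degExp lam 1) (degExp lam 1 - 1) - 1) := by
    rw [pcomp_mul hg, pcomp_pow hg, pcomp_add, pcomp_one, honePlus2,
      pcomp_pow hg, pcomp_add, pcomp_one, pcomp_X hg]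
    have h1p : (1 + (pcomp (degExp lam 1) (degExp lam 1 - 1) - 1)) =
        pcomp (degExp lam 1) (degExp lam 1 - 1) := by ring
    rw [h1p]
    have e2 : degExp lam 1 ^ 2 + 1 = degExp lam 1 * (degExp lam 1 + degExp lam (-1)) := by
      rw [mul_add, he1]; ring
    have hfac : (pcomp (degExp lam 1) (degExp lam 1 - 1)) ^ 2 + 1 =
        pcomp (degExp lam 1) (degExp lam 1 - 1) *
        pcomp (degExp lam 1 + degExp lam (-1)) (degExp lam 1 - 1) :=
      calc (pcomp (degExp lam 1) (degExp lam 1 - 1)) ^ 2 + 1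
          = pcomp (degExp lam 1 ^ 2) (degExp lam 1 - 1) + pcomp 1 (degExp lam 1 - 1) := by
            rw [pcomp_pow hh, pcomp_one]
        _ = pcomp (degExp lam 1 ^ 2 + 1) (degExp lam 1 - 1) := (pcomp_add _ _ _).symm
        _ = pcomp (degExp lam 1 * (degExp lam 1 + degExp lam (-1))) (degExp lam 1 - 1) := by
            rw [e2]
        _ = pcomp (degExp lam 1) (degExp lam 1 - 1) *
            pcomp (degExp lam 1 + degExp lam (-1)) (degExp lam 1 - 1) := pcomp_mul hh _ _
    rw [hfac, mul_pow]
  -- RHS simplification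
  have hRHS : pcomp ((2:PowerSeries ℝ) ^ r * onePlus (x + r))
        (pcomp (degExp lam 1) (degExp lam 1 - 1) - 1) =
      2 ^ r * pcomp (degExp lam x) (degExp lam 1 - 1) *
        (pcomp (degExp lam 1) (degExp lam 1 - 1)) ^ r := by
    rw [pcomp_mul hg, pcomp_pow hg, pcomp_two, hA,
      ← pcomp_assoc hh hh (onePlus (x + (r:ℝ))), pcomp_onePlus]
    have hx : degExp lam (x + (r:ℝ)) = degExp lam x * (degExp lam 1) ^ r := by
      rw [← degExp_mul, degExp_nat]
    rw [hx, pcomp_mul hh, pcomp_pow hh, mul_assoc]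
  -- derive ★
  have hstar1 : (pcomp (degExp lam 1 + degExp lam (-1)) (degExp lam 1 - 1)) ^ r *
      pcomp (PowerSeries.mk fun l => C x l / l.factorial)
        (pcomp (degExp lam 1) (degExp lam 1 - 1) - 1) =
      2 ^ r * pcomp (degExp lam x) (degExp lam 1 - 1) := by
    have h1 := hCg
    rw [hLHS, hRHS] at h1
    have hpow : (pcomp (degExp lam 1) (degExp lam 1 - 1)) ^ r ≠ 0 := pow_ne_zero _ hpe_ne
    apply mul_left_cancel₀ hpow
    linear_combination h1
  -- hE transformed
  have hstar2 : (pcomp (degExp lam 1 + degExp lam (-1)) (degExp lam 1 - 1)) ^ r *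
      pcomp (PowerSeries.mk fun n => E x n / n.factorial) (degExp lam 1 - 1) =
      2 ^ r * pcomp (degExp lam x) (degExp lam 1 - 1) := by
    have h1 : pcomp ((degExp lam 1 + degExp lam (-1)) ^ r *
        PowerSeries.mk (fun n => E x n / n.factorial)) (degExp lam 1 - 1) =
        pcomp ((2:PowerSeries ℝ) ^ r * degExp lam x) (degExp lam 1 - 1) := by rw [hE x]
    rw [pcomp_mul hh, pcomp_pow hh, pcomp_mul hh, pcomp_pow hh, pcomp_two] at h1
    exact h1
  -- ★★
  have hstar : pcomp (PowerSeries.mk fun n => E x n / n.factorial) (degExp lam 1 - 1) =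
      pcomp (PowerSeries.mk fun l => C x l / l.factorial)
        (pcomp (degExp lam 1) (degExp lam 1 - 1) - 1) := by
    have hpow : (pcomp (degExp lam 1 + degExp lam (-1)) (degExp lam 1 - 1)) ^ r ≠ 0 :=
      pow_ne_zero _ hsum_ne
    apply mul_left_cancel₀ hpow
    rw [hstar1, hstar2]
  -- Step D : matrices
  set M : ℕ → ℕ → ℝ := fun p q =>
    (p.factorial : ℝ) * PowerSeries.coeff p ((degExp lam 1 - 1) ^ q) / q.factorial
    with hMdef
  have hM0 : ∀ p q : ℕ, p < q → M p q = 0 := by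
    intro p q h
    simp only [hMdef]
    rw [coeff_pow_zero hh h]
    simp
  have hMdff : ∀ (y : ℝ) (p : ℕ),
      dff lam y p = ∑ q ∈ Finset.range (p + 1), M p q * dff 1 y q := by
    intro y p
    have h1 := congrArg (PowerSeries.coeff p) (pcomp_onePlus lam y)
    rw [coeff_pcomp, coeff_degExp] at h1
    have hfp : (p.factorial : ℝ) ≠ 0 := Nat.cast_ne_zero.2 p.factorial_ne_zero
    have h2 : dff lam y p = (∑ k ∈ Finset.range (p + 1),
        PowerSeries.coeff k (onePlus y) * PowerSeries.coeff p ((degExp lam 1 - 1) ^ k)) *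
        (p.factorial : ℝ) := by
      rw [h1]
      field_simp
    rw [h2, Finset.sum_mul]
    refine Finset.sum_congr rfl fun q _ => ?_
    have hfq : (q.factorial : ℝ) ≠ 0 := Nat.cast_ne_zero.2 q.factorial_ne_zero
    rw [onePlus, PowerSeries.coeff_mk]
    simp only [hMdef]
    field_simp
  set S1' : ℕ → ℕ → ℝ := fun p q => if q ≤ p then S1 p q else 0 with hS1'def
  have key : ∀ p : ℕ, ∀ l, l ≤ p →
      (∑ q ∈ Finset.range (p + 1), M p q * S1' q l) = if l = p then 1 else 0 := by
    intro p
    refine dff_unique hlam p _ _ ?_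
    intro y
    have hrhs : ∑ l ∈ Finset.range (p + 1), (if l = p then (1:ℝ) else 0) * dff lam y l =
        dff lam y p := by
      rw [Finset.sum_eq_single_of_mem p (Finset.mem_range.2 (Nat.lt_succ_self p))]
      · simp
      · intro j _ hj; simp [hj]
    rw [hrhs]
    -- LHS: swap sums
    have hswap : ∑ l ∈ Finset.range (p + 1),
        (∑ q ∈ Finset.range (p + 1), M p q * S1' q l) * dff lam y l =
        ∑ q ∈ Finset.range (p + 1), M p q *
          (∑ l ∈ Finset.range (p + 1), S1' q l * dff lam y l) := by
      simp only [Finset.sum_mul]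
      rw [Finset.sum_comm]
      refine Finset.sum_congr rfl fun q _ => ?_
      rw [Finset.mul_sum]
      exact Finset.sum_congr rfl fun l _ => by ring
    rw [hswap]
    have hinner : ∀ q ∈ Finset.range (p + 1),
        M p q * (∑ l ∈ Finset.range (p + 1), S1' q l * dff lam y l) =
        M p q * dff 1 y q := by
      intro q hq
      rw [Finset.mem_range] at hq
      congr 1
      have hshrink : ∑ l ∈ Finset.range (q + 1), S1' q l * dff lam y l =
          ∑ l ∈ Finset.range (p + 1), S1' q l * dff lam y l := by
        refine Finset.sum_subset (Finset.range_subset_range.2 (by omega)) ?_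
        intro l _ hl
        rw [Finset.mem_range, not_lt] at hl
        have : S1' q l = 0 := if_neg (by omega)
        rw [this, zero_mul]
      rw [← hshrink, hS1 y q]
      refine Finset.sum_congr rfl fun l hl => ?_
      rw [Finset.mem_range] at hl
      have : S1' q l = S1 q l := if_pos (by omega)
      rw [this]
    rw [Finset.sum_congr rfl hinner]
    exact (hMdff y p).symm
  -- extended inverse identity over range (n+1)
  have hABentry : ∀ p, p ≤ n → ∀ l, l ≤ n →
      (∑ q ∈ Finset.range (n + 1), M p q * S1' q l) = if l = p then 1 else 0 := by
    intro p hp l hl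
    by_cases hlp : l ≤ p
    · have h1 := key p l hlp
      have h2 : ∑ q ∈ Finset.range (p + 1), M p q * S1' q l =
          ∑ q ∈ Finset.range (n + 1), M p q * S1' q l := by
        refine Finset.sum_subset (Finset.range_subset_range.2 (by omega)) ?_
        intro q _ hq
        rw [Finset.mem_range, not_lt] at hq
        rw [hM0 p q (by omega), zero_mul]
      rw [← h2, h1]
    · rw [if_neg (by omega)]
      refine Finset.sum_eq_zero fun q _ => ?_
      by_cases hqp : q ≤ p
      · have : S1' q l = 0 := if_neg (by omega)
        rw [this, mul_zero]
      · rw [hM0 p q (by omega), zero_mul]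
  -- matrix inversion
  have hAB : (Matrix.of fun i j : Fin (n+1) => M i j) *
      (Matrix.of fun i j : Fin (n+1) => S1' i j) = 1 := by
    ext i j
    rw [Matrix.mul_apply, Matrix.one_apply]
    have h1 : ∑ k : Fin (n+1), M i k * S1' k j =
        ∑ k ∈ Finset.range (n+1), M i k * S1' k j :=
      Fin.sum_univ_eq_sum_range (fun k => M i k * S1' k j) (n+1)
    have h2 := hABentry i (Nat.lt_succ_iff.1 i.isLt) j (Nat.lt_succ_iff.1 j.isLt)
    simp only [Matrix.of_apply]
    rw [h1, h2]
    congr 1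
    simp [Fin.ext_iff, eq_comm]
  have hBA : (Matrix.of fun i j : Fin (n+1) => S1' i j) *
      (Matrix.of fun i j : Fin (n+1) => M i j) = 1 := mul_eq_one_comm.1 hAB
  have hBAentry : ∀ j, j ≤ n →
      (∑ k ∈ Finset.range (n+1), S1' n k * M k j) = if n = j then 1 else 0 := by
    intro j hj
    have h1 : ((Matrix.of fun i j : Fin (n+1) => S1' i j) *
        (Matrix.of fun i j : Fin (n+1) => M i j)) ⟨n, Nat.lt_succ_self n⟩ ⟨j, by omega⟩ =
        (1 : Matrix (Fin (n+1)) (Fin (n+1)) ℝ) ⟨n, Nat.lt_succ_self n⟩ ⟨j, by omega⟩ := by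
      rw [hBA]
    rw [Matrix.mul_apply, Matrix.one_apply] at h1
    simp only [Matrix.of_apply] at h1
    rw [Fin.sum_univ_eq_sum_range (fun k => S1' n k * M k j) (n+1)] at h1
    rw [h1]
    congr 1
    simp [Fin.ext_iff]
  -- b identity
  have hb : ∀ k, k ≤ n → (∑ l ∈ Finset.range (k + 1), SJ2 k l * C x l) =
      ∑ j ∈ Finset.range (n + 1), M k j * E x j := by
    intro k hk
    have h1 := congrArg (PowerSeries.coeff k) hstar
    rw [coeff_pcomp, hB k] at h1
    have hfk : (k.factorial : ℝ) ≠ 0 := Nat.cast_ne_zero.2 k.factorial_ne_zero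
    have h2 : (∑ l ∈ Finset.range (k + 1), SJ2 k l * C x l) =
        (∑ j ∈ Finset.range (k + 1), PowerSeries.coeff j
          (PowerSeries.mk fun m => E x m / m.factorial) *
          PowerSeries.coeff k ((degExp lam 1 - 1) ^ j)) * (k.factorial : ℝ) := by
      rw [h1]
      field_simp
    rw [h2, Finset.sum_mul]
    have h3 : ∀ j ∈ Finset.range (k + 1),
        PowerSeries.coeff j (PowerSeries.mk fun m => E x m / m.factorial) *
          PowerSeries.coeff k ((degExp lam 1 - 1) ^ j) * (k.factorial : ℝ) =
        M k j * E x j := by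
      intro j _
      rw [PowerSeries.coeff_mk]
      simp only [hMdef]
      have hfj : (j.factorial : ℝ) ≠ 0 := Nat.cast_ne_zero.2 j.factorial_ne_zero
      field_simp
    rw [Finset.sum_congr rfl h3]
    refine Finset.sum_subset (Finset.range_subset_range.2 (by omega)) ?_
    intro j _ hj
    rw [Finset.mem_range, not_lt] at hj
    rw [hM0 k j (by omega), zero_mul]
  -- final computation
  have hfinal : ∑ k ∈ Finset.range (n + 1), ∑ l ∈ Finset.range (k + 1),
      S1 n k * SJ2 k l * C x l =
      ∑ k ∈ Finset.range (n + 1), S1' n k * ∑ j ∈ Finset.range (n + 1), M k j * E x j := by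
    refine Finset.sum_congr rfl fun k hk => ?_
    rw [Finset.mem_range] at hk
    have hstep : ∑ l ∈ Finset.range (k + 1), S1 n k * SJ2 k l * C x l =
        S1 n k * ∑ l ∈ Finset.range (k + 1), SJ2 k l * C x l := by
      rw [Finset.mul_sum]
      exact Finset.sum_congr rfl fun l _ => by ring
    rw [hstep, hb k (by omega)]
    have : S1' n k = S1 n k := if_pos (by omega)
    rw [this]
  rw [hfinal]
  have hswap2 : ∑ k ∈ Finset.range (n + 1), S1' n k *
      ∑ j ∈ Finset.range (n + 1), M k j * E x j =
      ∑ j ∈ Finset.range (n + 1),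
        (∑ k ∈ Finset.range (n + 1), S1' n k * M k j) * E x j := by
    simp only [Finset.mul_sum, Finset.sum_mul]
    rw [Finset.sum_comm]
    exact Finset.sum_congr rfl fun j _ => Finset.sum_congr rfl fun k _ => by ring
  rw [hswap2]
  have hdel : ∀ j ∈ Finset.range (n + 1),
      (∑ k ∈ Finset.range (n + 1), S1' n k * M k j) * E x j =
      (if n = j then (1:ℝ) else 0) * E x j := by
    intro j hj
    rw [Finset.mem_range] at hj
    rw [hBAentry j (by omega)]
  rw [Finset.sum_congr rfl hdel,
    Finset.sum_eq_single_of_mem n (Finset.mem_range.2 (Nat.lt_succ_self n))]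
  · simp
  · intro j _ hj
    rw [if_neg (Ne.symm hj), zero_mul]
end

section
/- For every integer n ≥ 1, the degenerate harmonic number satisfies H_{n,λ} = Σ_{k=1}^{n} (−λ)^{k−1}·(1)_{k,1/λ}/k!, where (1)_{k,1/λ} = ∏_{i=0}^{k−1}(1 − i/λ). -/
open Finset PowerSeries

/-- `H_{n,λ} = Σ_{k=1}^n (-λ)^{k-1} (1)_{k,1/λ} / k!` for `n ≥ 1`. -/
theorem stmt_13 (lam : ℝ) (hlam : lam ≠ 0)
    (H : ℕ → ℝ)
    (hH : (1 - PowerSeries.X) * PowerSeries.mk (fun n => if n = 0 then 0 else H n) =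
      - degLogNeg lam)
    (n : ℕ) (hn : 1 ≤ n) :
    H n = ∑ k ∈ Finset.Icc 1 n, (-lam) ^ (k - 1) * oneFall lam k / k.factorial := by
  simp only [degLogNeg] at hH
  simp only [oneFall]
  have key : ∀ m : ℕ, H (m+1) - (if m = 0 then (0:ℝ) else H m) =
      (-lam) ^ m * (∏ i ∈ Finset.range (m+1), (1 - (i : ℝ) / lam)) / (m+1).factorial := by
    intro m
    have h := congrArg (PowerSeries.coeff (R := ℝ) (m+1)) hH
    rw [sub_mul, one_mul, map_sub, PowerSeries.coeff_succ_X_mul] at h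
    simp only [coeff_mk, map_neg, Nat.succ_ne_zero, if_false, Nat.add_sub_cancel, oneFall] at h
    rw [h, neg_pow, pow_succ]
    ring
  induction n with
  | zero => omega
  | succ m ih =>
    rcases Nat.eq_zero_or_pos m with hm | hm
    · subst hm
      have := key 0
      simp at this
      simp [this]
    · rw [Finset.sum_Icc_succ_top (by omega : 1 ≤ m+1), ← ih hm]
      have := key m
      rw [if_neg (by omega)] at this
      simp only [Nat.add_sub_cancel]
      linarith [this]
end

section
/- For every integer n ≥ 0 and every real number x, H_{n,λ}^{(0)}(x) = Σ_{m=0}^{n} (−1)^{n−m}·((x)_{n−m}/(n−m)!)·H_{m+1,λ}. -/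
open Finset PowerSeries

lemma dff_shift (x : ℝ) (n : ℕ) :
    dff 1 x (n+1) = dff 1 (x-1) (n+1) + (n+1) * dff 1 (x-1) n := by
  have h1 : dff 1 x (n+1) = dff 1 (x-1) n * x := by
    unfold dff
    rw [Finset.prod_range_succ']
    congr 1
    apply Finset.prod_congr rfl
    intro i _
    push_cast
    ring
    · ring
  have h2 : dff 1 (x-1) (n+1) = dff 1 (x-1) n * (x - 1 - n) := by
    unfold dff
    rw [Finset.prod_range_succ]
    congr 1
    push_cast; ring
  rw [h1, h2]; ring

lemma oneMinus_step (x : ℝ) :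
    (1 - PowerSeries.X) * oneMinus (x - 1) = oneMinus x := by
  ext n
  rw [sub_mul, one_mul, map_sub]
  cases n with
  | zero => simp [oneMinus, dff]
  | succ k =>
    rw [PowerSeries.coeff_succ_X_mul]
    simp only [oneMinus, PowerSeries.coeff_mk]
    rw [dff_shift x k]
    have hk : ((k+1).factorial : ℝ) ≠ 0 := by positivity
    have hk' : ((k).factorial : ℝ) ≠ 0 := by positivity
    rw [Nat.factorial_succ]
    push_cast
    field_simp
    ring

/-- `H_{n,λ}^{(0)}(x) = Σ_{m=0}^n (-1)^{n-m} ((x)_{n-m}/(n-m)!) H_{m+1,λ}`. -/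
theorem stmt_15 (lam : ℝ) (hlam : lam ≠ 0)
    (H : ℕ → ℝ)
    (hH : (1 - PowerSeries.X) * PowerSeries.mk (fun n => if n = 0 then 0 else H n) =
      - degLogNeg lam)
    (Hp : ℕ → ℝ → ℕ → ℝ)
    (hHp : ∀ (r : ℕ) (x : ℝ), PowerSeries.X * PowerSeries.mk (fun n => Hp r x n) =
      (- degLogNeg lam) ^ (r + 1) * oneMinus (x - 1))
    (n : ℕ) (x : ℝ) :
    Hp 0 x n = ∑ m ∈ Finset.range (n + 1),
      (-1 : ℝ) ^ (n - m) * (dff 1 x (n - m) / (n - m).factorial) * H (m + 1) := by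
  have h1 := hHp 0 x
  rw [pow_one, ← hH, mul_comm (1 - PowerSeries.X), mul_assoc, oneMinus_step x] at h1
  have h2 := congrArg (PowerSeries.coeff (n + 1)) h1
  rw [PowerSeries.coeff_succ_X_mul, PowerSeries.coeff_mul] at h2
  rw [Finset.Nat.sum_antidiagonal_eq_sum_range_succ
    (fun i j => (PowerSeries.coeff i (PowerSeries.mk fun n => if n = 0 then 0 else H n)) *
      PowerSeries.coeff j (oneMinus x))] at h2
  rw [Finset.sum_range_succ'] at h2
  simp only [PowerSeries.coeff_mk, oneMinus, if_pos rfl, if_true, zero_mul, add_zero] at h2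
  rw [h2]
  apply Finset.sum_congr rfl
  intro m hm
  have hm' : m ≤ n := Nat.lt_succ_iff.mp (Finset.mem_range.mp hm)
  have : n + 1 - (m + 1) = n - m := by omega
  rw [this]
  have : (m + 1 ≠ 0) := by omega
  simp only [if_neg this]
  ring
end

section
/- Let r ≥ 0 be an integer. For every integer n with n ≥ r, H_{n,λ}^{(r)} = Σ_{l=r+1}^{n+1} Σ_{l_1+···+l_{r+1}=l, each l_i ≥ 1} ((−λ)^{l−r−1}/(l_1!·l_2!···l_{r+1}!))·(1)_{l_1,1/λ}·(1)_{l_2,1/λ}···(1)_{l_{r+1},1/λ}, and for every integer n with 0 ≤ n < r, H_{n,λ}^{(r)} = 0. -/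
/-! Since `(1 - t)⁻¹ = ∑ tⁿ`, the defining identity at `x = 0` makes `H_{n,λ}^{(r)}` the sum of the
coefficients of `t^l`, `l ≤ n + 1`, in `(-log_λ(1 - t))^(r+1)`. As `-log_λ(1 - t)` has no constant
term, the coefficient of `t^l` in its `(r+1)`-st power is a sum over compositions of `l` into
`r + 1` positive parts, and it vanishes for `l ≤ r`. -/

open Finset PowerSeries

namespace PowerSeries

variable {R : Type*} [CommSemiring R]

theorem coeff_pow_eq_sum_antidiagonalTuple (φ : R⟦X⟧) (k n : ℕ) :
    coeff n (φ ^ k) = ∑ f ∈ Nat.antidiagonalTuple k n, ∏ i, coeff (f i) φ := by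
  classical
  have hprod : φ ^ k = ∏ _i : Fin k, φ := by simp
  rw [hprod, coeff_prod, finsuppAntidiag, sum_map, ← piAntidiag_univ_fin_eq_antidiagonalTuple]
  exact sum_attach _ fun f : Fin k → ℕ => ∏ i, coeff (f i) φ

theorem coeff_pow_eq_sum_antidiagonalTuple_of_constantCoeff_eq_zero {φ : R⟦X⟧}
    (hφ : constantCoeff φ = 0) (k n : ℕ) :
    coeff n (φ ^ k) =
      ∑ f ∈ (Nat.antidiagonalTuple k n).filter (fun f => ∀ i, 1 ≤ f i),
        ∏ i, coeff (f i) φ := by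
  classical
  rw [coeff_pow_eq_sum_antidiagonalTuple, sum_filter_of_ne]
  intro f _ hf i
  by_contra! hi
  apply hf
  refine prod_eq_zero (mem_univ i) ?_
  rw [Nat.lt_one_iff.1 hi, coeff_zero_eq_constantCoeff_apply, hφ]

theorem coeff_pow_eq_zero_of_constantCoeff_eq_zero {φ : R⟦X⟧} (hφ : constantCoeff φ = 0)
    {k n : ℕ} (hn : n < k) : coeff n (φ ^ k) = 0 :=
  X_pow_dvd_iff.1 (pow_dvd_pow_of_dvd (X_dvd_iff.2 hφ) k) n hn

theorem coeff_mul_mk_one (φ : R⟦X⟧) (n : ℕ) :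
    coeff n (φ * mk 1) = ∑ l ∈ range (n + 1), coeff l φ := by
  simp [coeff_mul, Nat.sum_antidiagonal_eq_sum_range_succ_mk]

theorem coeff_pow_mul_mk_one {φ : R⟦X⟧} (hφ : constantCoeff φ = 0) (k n : ℕ) :
    coeff n (φ ^ k * mk 1) = ∑ l ∈ Icc k n, coeff l (φ ^ k) := by
  rw [coeff_mul_mk_one]
  refine (sum_subset (fun l hl => ?_) fun l _ hl => ?_).symm
  · simp only [mem_Icc, mem_range] at hl ⊢
    omega
  · exact coeff_pow_eq_zero_of_constantCoeff_eq_zero hφ (by simp_all)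

end PowerSeries

lemma dff_one_neg_one (m : ℕ) : dff 1 (-1) m = (-1) ^ m * m.factorial := by
  induction m with
  | zero => simp [dff]
  | succ k ih =>
    rw [dff, prod_range_succ, ← dff, ih, Nat.factorial_succ]
    push_cast
    ring

lemma oneMinus_neg_one : oneMinus (-1) = PowerSeries.mk 1 := by
  ext m
  rw [oneMinus, coeff_mk, coeff_mk, dff_one_neg_one, mul_right_comm, ← mul_pow]
  simp [Nat.factorial_ne_zero]

lemma constantCoeff_neg_degLogNeg (lam : ℝ) : constantCoeff (-degLogNeg lam) = 0 := by
  rw [← coeff_zero_eq_constantCoeff_apply, map_neg, degLogNeg, coeff_mk, if_pos rfl, neg_zero]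

lemma coeff_neg_degLogNeg (lam : ℝ) {m : ℕ} (hm : 1 ≤ m) :
    coeff m (-degLogNeg lam) = (-lam) ^ (m - 1) * oneFall lam m / m.factorial := by
  obtain ⟨k, rfl⟩ := Nat.exists_eq_add_of_le' hm
  rw [map_neg, degLogNeg, coeff_mk, if_neg k.succ_ne_zero, Nat.add_sub_cancel, neg_pow, pow_succ]
  ring

lemma coeff_neg_degLogNeg_pow (lam : ℝ) (k l : ℕ) :
    coeff l ((-degLogNeg lam) ^ k) =
      ∑ f ∈ (Nat.antidiagonalTuple k l).filter (fun f => ∀ i, 1 ≤ f i),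
        (-lam) ^ (l - k) / (∏ i, ((f i).factorial : ℝ)) * ∏ i, oneFall lam (f i) := by
  rw [coeff_pow_eq_sum_antidiagonalTuple_of_constantCoeff_eq_zero
    (constantCoeff_neg_degLogNeg lam)]
  refine sum_congr rfl fun f hf => ?_
  rw [mem_filter, Nat.mem_antidiagonalTuple] at hf
  obtain ⟨hsum, hpos⟩ := hf
  have hexp : ∑ i, (f i - 1) = l - k := by
    rw [sum_tsub_distrib _ fun i _ => hpos i, hsum]
    simp
  simp_rw [coeff_neg_degLogNeg lam (hpos _)]
  rw [prod_div_distrib, prod_mul_distrib, prod_pow_eq_pow_sum, hexp]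
  ring

theorem stmt_16_general (lam : ℝ)
    (Hp : ℕ → ℝ → ℕ → ℝ)
    (hHp : ∀ (r : ℕ) (x : ℝ), PowerSeries.X * PowerSeries.mk (fun n => Hp r x n) =
      (- degLogNeg lam) ^ (r + 1) * oneMinus (x - 1))
    (r : ℕ) :
    (∀ n : ℕ, r ≤ n → Hp r 0 n =
      ∑ l ∈ Finset.Icc (r + 1) (n + 1),
        ∑ f ∈ (Finset.Nat.antidiagonalTuple (r + 1) l).filter (fun f => ∀ i, 1 ≤ f i),
          (-lam) ^ (l - (r + 1)) / (∏ i, ((f i).factorial : ℝ)) *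
            ∏ i, oneFall lam (f i)) ∧
    (∀ n : ℕ, n < r → Hp r 0 n = 0) := by
  have key (n : ℕ) :
      Hp r 0 n = ∑ l ∈ Icc (r + 1) (n + 1), coeff l ((-degLogNeg lam) ^ (r + 1)) := by
    have h := congrArg (coeff (n + 1)) (hHp r 0)
    rwa [coeff_succ_X_mul, coeff_mk, zero_sub, oneMinus_neg_one, coeff_pow_mul_mk_one
      (constantCoeff_neg_degLogNeg lam)] at h
  simp_rw [coeff_neg_degLogNeg_pow] at key
  exact ⟨fun n _ => key n, fun n hn => by rw [key, Icc_eq_empty (by omega), sum_empty]⟩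

/-- Explicit expression for the degenerate harmonic numbers of order `r`:
`H_{n,λ}^{(r)} = Σ_{l=r+1}^{n+1} Σ_{l₁+⋯+l_{r+1}=l, lᵢ≥1}
  ((-λ)^{l-r-1}/(l₁!⋯l_{r+1}!)) (1)_{l₁,1/λ} ⋯ (1)_{l_{r+1},1/λ}` for `n ≥ r`,
and `H_{n,λ}^{(r)} = 0` for `n < r`. -/
theorem stmt_16 (lam : ℝ) (hlam : lam ≠ 0)
    (Hp : ℕ → ℝ → ℕ → ℝ)
    (hHp : ∀ (r : ℕ) (x : ℝ), PowerSeries.X * PowerSeries.mk (fun n => Hp r x n) =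
      (- degLogNeg lam) ^ (r + 1) * oneMinus (x - 1))
    (r : ℕ) :
    (∀ n : ℕ, r ≤ n → Hp r 0 n =
      ∑ l ∈ Finset.Icc (r + 1) (n + 1),
        ∑ f ∈ (Finset.Nat.antidiagonalTuple (r + 1) l).filter (fun f => ∀ i, 1 ≤ f i),
          (-lam) ^ (l - (r + 1)) / (∏ i, ((f i).factorial : ℝ)) *
            ∏ i, oneFall lam (f i)) ∧
    (∀ n : ℕ, n < r → Hp r 0 n = 0) :=
  stmt_16_general lam Hp hHp r
end
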